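/- Let E be a finite graph with no sinks, let R be a unital commutative ring of characteristic 0, and let α₁, …, αₙ ∈ E* be paths in E. Then the following are equivalent: (1) the cylinder sets Z(α₁), …, Z(αₙ) are pairwise disjoint and their union is E^∞; (2) Σᵢ αᵢαᵢ* = 1 in L_R(E). -/

import Mathlib

open MulOpposite

noncomputable section

/-- A directed graph: vertices, edges, source and range maps. -/
structure LGraph where
  V : Type
  Ed : Type
  src : Ed → V
  rng : Ed → V

namespace Leavitt

/-- Generators of the Leavitt path algebra: vertices, edges and ghost edges. -/
inductive Gen (G : LGraph) : Type
  | vert : G.V → Gen G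
  | edge : G.Ed → Gen G
  | ghost : G.Ed → Gen G

/-- The star operation on generators: fixes vertices, swaps edges and ghost edges. -/
def starGen {G : LGraph} : Gen G → Gen G
  | .vert v => .vert v
  | .edge e => .ghost e
  | .ghost e => .edge e

@[simp] lemma starGen_vert {G : LGraph} (v : G.V) : starGen (.vert v : Gen G) = .vert v := rfl
@[simp] lemma starGen_edge {G : LGraph} (e : G.Ed) : starGen (.edge e : Gen G) = .ghost e := rfl
@[simp] lemma starGen_ghost {G : LGraph} (e : G.Ed) : starGen (.ghost e : Gen G) = .edge e := rfl

/-- Words in the generators. -/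
abbrev Wd (G : LGraph) : Type := FreeMonoid (Gen G)

/-- The star of a word: reverse it and star each letter. -/
def wordStar {G : LGraph} (w : Wd G) : Wd G :=
  FreeMonoid.ofList (((FreeMonoid.toList w).map starGen).reverse)

/-- A vertex is a sink if it emits no edge. -/
def IsSink (G : LGraph) (v : G.V) : Prop := ∀ e : G.Ed, G.src e ≠ v

/-- The free `R`-algebra on the generators, realized as a monoid algebra on words. -/
abbrev MA (R : Type) [CommRing R] (G : LGraph) : Type := MonoidAlgebra R (Wd G)

/-- The generator `g` as an element of the free algebra. -/
def gn (R : Type) [CommRing R] {G : LGraph} (g : Gen G) : MA R G :=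
  MonoidAlgebra.single (FreeMonoid.of g) (1 : R)

/-- The defining relations of the Leavitt path algebra `L_R(E)`. -/
inductive LRel (R : Type) [CommRing R] (G : LGraph) : MA R G → MA R G → Prop
  | vert_vert {v w : G.V} (h : v ≠ w) : LRel R G (gn R (.vert v) * gn R (.vert w)) 0
  | vert_idem (v : G.V) : LRel R G (gn R (.vert v) * gn R (.vert v)) (gn R (.vert v))
  | ghost_edge {e f : G.Ed} (h : e ≠ f) : LRel R G (gn R (.ghost e) * gn R (.edge f)) 0
  | ghost_edge_self (e : G.Ed) :
      LRel R G (gn R (.ghost e) * gn R (.edge e)) (gn R (.vert (G.rng e)))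
  | src_mul_edge (e : G.Ed) :
      LRel R G (gn R (.vert (G.src e)) * gn R (.edge e)) (gn R (.edge e))
  | edge_mul_rng (e : G.Ed) :
      LRel R G (gn R (.edge e) * gn R (.vert (G.rng e))) (gn R (.edge e))
  | ghost_mul_src (e : G.Ed) :
      LRel R G (gn R (.ghost e) * gn R (.vert (G.src e))) (gn R (.ghost e))
  | rng_mul_ghost (e : G.Ed) :
      LRel R G (gn R (.vert (G.rng e)) * gn R (.ghost e)) (gn R (.ghost e))
  | ck (v : G.V) (h : {e : G.Ed | G.src e = v}.Finite)
      (hne : {e : G.Ed | G.src e = v}.Nonempty) :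
      LRel R G (gn R (.vert v)) (∑ e ∈ h.toFinset, gn R (.edge e) * gn R (.ghost e))
  | unit (h : (Set.univ : Set G.V).Finite) :
      LRel R G 1 (∑ v ∈ h.toFinset, gn R (.vert v))

/-- The Leavitt path algebra of the graph `G` with coefficients in `R`. -/
abbrev LPA (R : Type) [CommRing R] (G : LGraph) : Type := RingQuot (LRel R G)

/-- The quotient map onto the Leavitt path algebra. -/
def mk (R : Type) [CommRing R] (G : LGraph) : MA R G →+* LPA R G :=
  RingQuot.mkRingHom (LRel R G)

variable (R : Type) [CommRing R] (G : LGraph)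

/-- Auxiliary monoid homomorphism sending a word to the image in the opposite algebra of
its starred word. -/
def ghostMap : Wd G →* (LPA R G)ᵐᵒᵖ :=
  FreeMonoid.lift fun x => op (mk R G (gn R (starGen x)))

/-- The underlying ring homomorphism of the (conjugate-linear, with respect to `σ`)
involution, from the free algebra to the opposite of the Leavitt path algebra. -/
def starPre (σ : R →+* R) : MA R G →+* (LPA R G)ᵐᵒᵖ :=
  MonoidAlgebra.liftNCRingHom ((algebraMap R (LPA R G)ᵐᵒᵖ).comp σ) (ghostMap R G)
    (fun x y => Algebra.commute_algebraMap_left (σ x) _)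

lemma starPre_single (σ : R →+* R) (w : Wd G) (c : R) :
    starPre R G σ (MonoidAlgebra.single w c)
      = algebraMap R (LPA R G)ᵐᵒᵖ (σ c) * ghostMap R G w := by
  classical
  exact MonoidAlgebra.liftNC_single _ _ _ _

lemma starPre_gn (σ : R →+* R) (a : Gen G) :
    starPre R G σ (gn R a) = op (mk R G (gn R (starGen a))) := by
  rw [gn, starPre_single, map_one, map_one, one_mul]
  rfl

lemma starPre_gn_mul (σ : R →+* R) (a b : Gen G) :
    starPre R G σ (gn R a * gn R b)
      = op (mk R G (gn R (starGen b) * gn R (starGen a))) := by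
  rw [map_mul, starPre_gn, starPre_gn, ← op_mul, ← map_mul]

lemma starPre_rel (σ : R →+* R) :
    ∀ ⦃a b : MA R G⦄, LRel R G a b → starPre R G σ a = starPre R G σ b := by
  have key : ∀ {x y : MA R G}, LRel R G x y → mk R G x = mk R G y :=
    fun h => RingQuot.mkRingHom_rel h
  intro a b h
  cases h with
  | vert_vert h =>
      rw [starPre_gn_mul, map_zero, starGen_vert, starGen_vert,
        key (LRel.vert_vert (Ne.symm h)), map_zero, op_zero]
  | vert_idem v =>
      rw [starPre_gn_mul, starPre_gn, starGen_vert, key (LRel.vert_idem v)]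
  | ghost_edge h =>
      rw [starPre_gn_mul, map_zero, starGen_edge, starGen_ghost,
        key (LRel.ghost_edge (Ne.symm h)), map_zero, op_zero]
  | ghost_edge_self e =>
      rw [starPre_gn_mul, starPre_gn, starGen_edge, starGen_ghost, starGen_vert,
        key (LRel.ghost_edge_self e)]
  | src_mul_edge e =>
      rw [starPre_gn_mul, starPre_gn, starGen_edge, starGen_vert,
        key (LRel.ghost_mul_src e)]
  | edge_mul_rng e =>
      rw [starPre_gn_mul, starPre_gn, starGen_edge, starGen_vert,
        key (LRel.rng_mul_ghost e)]
  | ghost_mul_src e =>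
      rw [starPre_gn_mul, starPre_gn, starGen_ghost, starGen_vert,
        key (LRel.src_mul_edge e)]
  | rng_mul_ghost e =>
      rw [starPre_gn_mul, starPre_gn, starGen_ghost, starGen_vert,
        key (LRel.edge_mul_rng e)]
  | ck v hfin hne =>
      rw [starPre_gn, starGen_vert, map_sum]
      simp only [starPre_gn_mul, starGen_edge, starGen_ghost]
      rw [← Finset.op_sum, ← map_sum, key (LRel.ck v hfin hne)]
  | unit hfin =>
      rw [map_one, map_sum]
      simp only [starPre_gn, starGen_vert]
      rw [← Finset.op_sum, ← map_sum, ← key (LRel.unit hfin), map_one, op_one]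

/-- The involution `x ↦ x*` on the Leavitt path algebra, conjugate-linear with respect
to the coefficient conjugation `σ`. -/
def lstar (σ : R →+* R) : LPA R G → LPA R G :=
  fun x => unop ((RingQuot.lift ⟨starPre R G σ, starPre_rel R G σ⟩) x)

/-- `chainOK G v l` : the list of edges `l` is a path starting at the vertex `v`. -/
def chainOK (G : LGraph) : G.V → List G.Ed → Prop
  | _, [] => True
  | v, e :: l => G.src e = v ∧ chainOK G (G.rng e) l

/-- The end vertex of a list of edges starting at `v`. -/
def pathEnd (G : LGraph) : G.V → List G.Ed → G.V
  | v, [] => v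
  | _, e :: l => pathEnd G (G.rng e) l

/-- A finite path in `G`: a starting vertex together with a compatible (possibly empty)
list of edges.  Vertices are the paths of length `0`. -/
structure GPath (G : LGraph) where
  first : G.V
  edges : List G.Ed
  ok : chainOK G first edges

/-- The range (end vertex) of a path. -/
def GPath.last {G : LGraph} (p : GPath G) : G.V := pathEnd G p.first p.edges

/-- The length of a path. -/
def GPath.length {G : LGraph} (p : GPath G) : ℕ := p.edges.length

/-- The word in the generators associated to a path. -/
def GPath.word {G : LGraph} (p : GPath G) : Wd G :=
  FreeMonoid.ofList (Gen.vert p.first :: p.edges.map Gen.edge)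

/-- The element `α` of `L_R(E)` associated to a path `α`. -/
def pathElem {G : LGraph} (p : GPath G) : LPA R G :=
  mk R G (MonoidAlgebra.single p.word (1 : R))

/-- The element `α*` of `L_R(E)` associated to a path `α`. -/
def pathElemStar {G : LGraph} (p : GPath G) : LPA R G :=
  mk R G (MonoidAlgebra.single (wordStar p.word) (1 : R))

/-- The diagonal subalgebra: the `R`-linear span of the `αα*` for finite paths `α`. -/
def diagonal : Submodule R (LPA R G) :=
  Submodule.span R (Set.range fun p : GPath G => pathElem R p * pathElemStar R p)

/-- The image of a vertex in the Leavitt path algebra. -/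
def vertexElem (v : G.V) : LPA R G := mk R G (gn R (.vert v))

/-- The image of an edge in the Leavitt path algebra. -/
def edgeElem (e : G.Ed) : LPA R G := mk R G (gn R (.edge e))

/-- The image of a ghost edge (`e*`) in the Leavitt path algebra. -/
def ghostElem (e : G.Ed) : LPA R G := mk R G (gn R (.ghost e))

/-- A projection: a self-adjoint idempotent. -/
def IsProjection (σ : R →+* R) (p : LPA R G) : Prop :=
  p * p = p ∧ lstar R G σ p = p

/-- A unitary element. -/
def IsUnitary (σ : R →+* R) (u : LPA R G) : Prop :=
  lstar R G σ u * u = 1 ∧ u * lstar R G σ u = 1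

/-- The adjacency matrix of a graph. -/
noncomputable def adjMatrix (G : LGraph) : Matrix G.V G.V ℤ :=
  Matrix.of fun v w => (Nat.card {e : G.Ed // G.src e = v ∧ G.rng e = w} : ℤ)

/-- A graph is strongly connected if there is a path between any two vertices. -/
def StronglyConnected (G : LGraph) : Prop :=
  ∀ u w : G.V, ∃ p : GPath G, p.first = u ∧ p.last = w

/-- A graph is essential if it has no sinks and no sources. -/
def Essential (G : LGraph) : Prop :=
  (∀ v : G.V, ∃ e : G.Ed, G.src e = v) ∧ (∀ v : G.V, ∃ e : G.Ed, G.rng e = v)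

/-- Condition (L): every cycle has an exit. -/
def ConditionL (G : LGraph) : Prop :=
  ∀ p : GPath G, p.edges ≠ [] → p.last = p.first →
    ∃ (i : Fin p.edges.length) (f : G.Ed),
      G.src f = G.src (p.edges.get i) ∧ f ≠ p.edges.get i

/-- Complex conjugation on a subring of `ℂ` closed under conjugation. -/
def conjHom (R : Subring ℂ) (hR : ∀ z ∈ R, (starRingEnd ℂ) z ∈ R) : ↥R →+* ↥R where
  toFun z := ⟨(starRingEnd ℂ) (z : ℂ), hR (z : ℂ) z.2⟩
  map_one' := by ext; simp
  map_mul' x y := by ext; simp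
  map_zero' := by ext; simp
  map_add' x y := by ext; simp

/-- A subring of `ℂ` has an essentially unique partition of the unit if whenever
`∑ λᵢ λ̄ᵢ = 1` with all `λᵢ` in the subring, all but one of the `λᵢ` vanish. -/
def HasEUP (R : Subring ℂ) : Prop :=
  ∀ (n : ℕ) (lam : Fin n → ↥R),
    (∑ i, (lam i : ℂ) * (starRingEnd ℂ) (lam i : ℂ)) = 1 →
      ∃ j : Fin n, ∀ i : Fin n, i ≠ j → lam i = 0

/-- The graph `E₂`: one vertex and two loops (`false` ↦ `a`, `true` ↦ `b`). -/
def E2 : LGraph := ⟨PUnit, Bool, fun _ => PUnit.unit, fun _ => PUnit.unit⟩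

/-- The graph `E₂₋`, the Cuntz splice of `E₂`.  Vertices: `0 = u`, `1 = v₁`, `2 = v₂`.
Edges: `0,1 = f₁,f₂` (loops at `u`), `2 = d₁ : u → v₁`, `3 = d₂ : v₁ → u`,
`4 = e₁` (loop at `v₁`), `5 = e₂ : v₁ → v₂`, `6 = e₃ : v₂ → v₁`, `7 = e₄` (loop at `v₂`). -/
def E2m : LGraph := ⟨Fin 3, Fin 8, ![0, 0, 0, 1, 1, 1, 2, 2], ![0, 0, 1, 0, 1, 2, 1, 2]⟩

end Leavitt

end

namespace Leavitt

/-- An infinite path in a graph. -/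
structure InfPath (G : LGraph) where
  seq : ℕ → G.Ed
  chain : ∀ n : ℕ, G.rng (seq n) = G.src (seq (n + 1))

/-- The cylinder set of a finite path: all infinite paths extending it. -/
def cylinder {G : LGraph} (p : GPath G) : Set (InfPath G) :=
  { x | G.src (x.seq 0) = p.first ∧ ∀ i : Fin p.edges.length, x.seq i = p.edges.get i }

end Leavitt

/-!
`L_R(E)` acts on the `R`-valued functions on `E^∞`: `v` restricts to paths starting at `v`,
`e` shifts paths starting with `e`, and `e*` prepends `e`. Then `α α*` acts as multiplication by
the indicator of `Z(α)`, so applying `∑ αᵢ αᵢ* = 1` to the constant function `1` shows that every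
infinite path lies in exactly one `Z(αᵢ)` (first as an identity in `R`, then in `ℕ` since `R` has
characteristic `0`).

Conversely, as no vertex is a sink, the Cuntz–Krieger relations add up to `∑ₑ e e* = 1`, so
`α α* = ∑ₑ (αe)(αe)*`. Refining all `αᵢ` to paths of a common length `N` turns `∑ αᵢ αᵢ*` into
`∑_{|β| = N} β β* = ∑_v v = 1`: every path `β` of length `N` extends to an infinite path, hence
extends exactly one `αᵢ`.
-/

theorem Set.pairwise_disjoint_and_iUnion_eq_univ_iff {X ι : Type*} (s : ι → Set X) :
    ((∀ i j, i ≠ j → Disjoint (s i) (s j)) ∧ ⋃ i, s i = Set.univ) ↔ ∀ x, ∃! i, x ∈ s i := by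
  refine ⟨fun ⟨hdisj, hcover⟩ x => ?_, fun h => ⟨fun i j hij => ?_, ?_⟩⟩
  · obtain ⟨i, hi⟩ := Set.mem_iUnion.mp (hcover ▸ Set.mem_univ x)
    exact ⟨i, hi, fun j hj => by_contra fun hji => Set.disjoint_left.mp (hdisj j i hji) hj hi⟩
  · exact Set.disjoint_left.mpr fun x hi hj => hij ((h x).unique hi hj)
  · exact Set.eq_univ_of_forall fun x => Set.mem_iUnion.mpr (h x).exists

namespace List

def listsOfLength (X : Type*) [Fintype X] (n : ℕ) : Finset (List X) :=
  (Finset.univ : Finset (Fin n → X)).map ⟨List.ofFn, List.ofFn_injective⟩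

variable {X : Type*} [Fintype X]

@[simp] theorem mem_listsOfLength {n : ℕ} {l : List X} :
    l ∈ listsOfLength X n ↔ l.length = n := by
  refine ⟨?_, fun h => ?_⟩
  · simp only [listsOfLength, Finset.mem_map, Finset.mem_univ, true_and]
    rintro ⟨f, rfl⟩
    exact List.length_ofFn
  · subst h
    exact Finset.mem_map.mpr ⟨l.get, Finset.mem_univ _, List.ofFn_get l⟩

theorem sum_listsOfLength_succ {M : Type*} [AddCommMonoid M] (n : ℕ) (h : List X → M) :
    ∑ l ∈ listsOfLength X (n + 1), h l = ∑ x, ∑ l ∈ listsOfLength X n, h (x :: l) := by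
  simp only [listsOfLength, Finset.sum_map]
  rw [← (Fin.consEquiv fun _ => X).sum_comp, Fintype.sum_prod_type]
  simp [Fin.consEquiv, List.ofFn_succ]

theorem sum_listsOfLength_filter_prefix [DecidableEq X] {M : Type*} [AddCommMonoid M] {n : ℕ}
    {m : List X} (hm : m.length ≤ n) (h : List X → M) :
    ∑ l ∈ (listsOfLength X n).filter (m <+: ·), h l
      = ∑ l ∈ listsOfLength X (n - m.length), h (m ++ l) := by
  have himage : (listsOfLength X n).filter (m <+: ·)
      = (listsOfLength X (n - m.length)).map ⟨(m ++ ·), List.append_right_injective m⟩ := by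
    ext l
    simp only [Finset.mem_filter, mem_listsOfLength, Finset.mem_map, Function.Embedding.coeFn_mk]
    constructor
    · rintro ⟨hl, t, rfl⟩
      exact ⟨t, by simp at hl; omega, rfl⟩
    · rintro ⟨t, ht, rfl⟩
      exact ⟨by simp; omega, t, rfl⟩
  rw [himage, Finset.sum_map]
  rfl

end List

namespace Leavitt

open scoped Classical

variable {E : LGraph}

namespace InfPath

def tail (ξ : InfPath E) : InfPath E :=
  ⟨fun n => ξ.seq (n + 1), fun n => ξ.chain (n + 1)⟩

def cons (e : E.Ed) (ξ : InfPath E) (h : E.rng e = E.src (ξ.seq 0)) : InfPath E :=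
  ⟨Stream'.cons e ξ.seq, fun n => by cases n with
    | zero => exact h
    | succ n => exact ξ.chain n⟩

@[simp] theorem cons_seq_zero (e : E.Ed) (ξ : InfPath E) (h) : (ξ.cons e h).seq 0 = e := rfl

@[simp] theorem tail_seq (ξ : InfPath E) (n : ℕ) : ξ.tail.seq n = ξ.seq (n + 1) := rfl

@[simp] theorem cons_tail (e : E.Ed) (ξ : InfPath E) (h) : (ξ.cons e h).tail = ξ := rfl

theorem tail_cons (ξ : InfPath E) (h) : ξ.tail.cons (ξ.seq 0) h = ξ := by
  obtain ⟨s, hs⟩ := ξ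
  simp only [cons, tail]
  congr 1
  funext n
  cases n <;> rfl

def take (ξ : InfPath E) (n : ℕ) : List E.Ed := Stream'.take n ξ.seq

@[simp] theorem take_zero (ξ : InfPath E) : ξ.take 0 = [] := rfl

@[simp] theorem length_take (ξ : InfPath E) (n : ℕ) : (ξ.take n).length = n :=
  Stream'.length_take n ξ.seq

@[simp] theorem getElem_take (ξ : InfPath E) {n i : ℕ} (h : i < (ξ.take n).length) :
    (ξ.take n)[i] = ξ.seq i :=
  Stream'.take_get _ _ _ h

theorem take_prefix_take (ξ : InfPath E) {m n : ℕ} (h : m ≤ n) : ξ.take m <+: ξ.take n :=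
  Stream'.take_prefix_take_left _ _ _ h

theorem rng_seq_zero_eq_src_tail (ξ : InfPath E) : E.rng (ξ.seq 0) = E.src (ξ.tail.seq 0) :=
  ξ.chain 0

theorem take_succ (ξ : InfPath E) (n : ℕ) :
    ξ.take (n + 1) = ξ.seq 0 :: ξ.tail.take n :=
  Stream'.take_succ n ξ.seq

theorem exists_src_seq_zero_eq (hnosink : ∀ v : E.V, ∃ e : E.Ed, E.src e = v) (v : E.V) :
    ∃ ξ : InfPath E, E.src (ξ.seq 0) = v := by
  choose out hout using hnosink
  exact ⟨⟨fun n => Nat.rec (out v) (fun _ e => out (E.rng e)) n, fun n => (hout _).symm⟩,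
    hout v⟩

theorem exists_extension (hnosink : ∀ v : E.V, ∃ e : E.Ed, E.src e = v) :
    ∀ {v : E.V} {m : List E.Ed}, chainOK E v m →
      ∃ ξ : InfPath E, E.src (ξ.seq 0) = v ∧ ξ.take m.length = m
  | v, [], _ => (exists_src_seq_zero_eq hnosink v).imp fun _ h => ⟨h, rfl⟩
  | _, e :: _, ⟨he, hm⟩ => by
      obtain ⟨ξ, hξ, htake⟩ := exists_extension hnosink hm
      exact ⟨ξ.cons e hξ.symm, he, by rw [List.length_cons, take_succ, cons_tail, htake]; rfl⟩

end InfPath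

theorem mem_cylinder_iff {p : GPath E} {ξ : InfPath E} :
    ξ ∈ cylinder p ↔ E.src (ξ.seq 0) = p.first ∧ ξ.take p.edges.length = p.edges := by
  refine and_congr_right fun _ => ?_
  rw [List.ext_get_iff]
  simp [Fin.forall_iff]

theorem mem_cylinder_iff_of_take_eq {p : GPath E} {ξ : InfPath E} {v : E.V} {l : List E.Ed}
    (hv : E.src (ξ.seq 0) = v) (hl : ξ.take l.length = l) (hp : p.edges.length ≤ l.length) :
    ξ ∈ cylinder p ↔ p.first = v ∧ p.edges <+: l := by
  rw [mem_cylinder_iff, hv, eq_comm (a := v)]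
  have htake : ξ.take p.edges.length <+: l := hl ▸ ξ.take_prefix_take hp
  refine and_congr_right fun _ => ⟨fun h => h ▸ htake, fun h => ?_⟩
  exact (List.prefix_of_prefix_length_le htake h (by simp)).eq_of_length (by simp)

theorem existsUnique_prefix_of_existsUnique_mem_cylinder
    (hnosink : ∀ v : E.V, ∃ e : E.Ed, E.src e = v) {ι : Type*} (α : ι → GPath E)
    (hα : ∀ ξ, ∃! i, ξ ∈ cylinder (α i)) {v : E.V} {l : List E.Ed} (hl : chainOK E v l)
    (hlen : ∀ i, (α i).edges.length ≤ l.length) :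
    ∃! i, (α i).first = v ∧ (α i).edges <+: l := by
  obtain ⟨ξ, hv, htake⟩ := InfPath.exists_extension hnosink hl
  exact (existsUnique_congr fun i => mem_cylinder_iff_of_take_eq hv htake (hlen i)).mp (hα ξ)

variable (R : Type) [CommRing R]

theorem vertexElem_mul_self (v : E.V) :
    vertexElem R E v * vertexElem R E v = vertexElem R E v := by
  rw [vertexElem, ← map_mul, mk, RingQuot.mkRingHom_rel (LRel.vert_idem v)]

theorem vertexElem_mul_vertexElem_of_ne {v w : E.V} (h : v ≠ w) :
    vertexElem R E v * vertexElem R E w = 0 := by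
  rw [vertexElem, vertexElem, ← map_mul, mk, RingQuot.mkRingHom_rel (LRel.vert_vert h), map_zero]

theorem vertexElem_src_mul_edgeElem (e : E.Ed) :
    vertexElem R E (E.src e) * edgeElem R E e = edgeElem R E e := by
  rw [vertexElem, edgeElem, ← map_mul, mk, RingQuot.mkRingHom_rel (LRel.src_mul_edge e)]

theorem edgeElem_mul_vertexElem_rng (e : E.Ed) :
    edgeElem R E e * vertexElem R E (E.rng e) = edgeElem R E e := by
  rw [vertexElem, edgeElem, ← map_mul, mk, RingQuot.mkRingHom_rel (LRel.edge_mul_rng e)]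

theorem sum_vertexElem [Fintype E.V] : ∑ v, vertexElem R E v = 1 := by
  rw [← map_one (mk R E), mk, RingQuot.mkRingHom_rel (LRel.unit Set.finite_univ), map_sum]
  exact Finset.sum_congr (by simp) fun _ _ => rfl

theorem vertexElem_eq_sum [Fintype E.Ed] {v : E.V} (hv : ∃ e : E.Ed, E.src e = v) :
    vertexElem R E v = ∑ e with E.src e = v, edgeElem R E e * ghostElem R E e := by
  rw [vertexElem, mk, RingQuot.mkRingHom_rel (LRel.ck v (Set.toFinite _) hv), map_sum]
  exact Finset.sum_congr (by ext; simp) fun _ _ => map_mul _ _ _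

theorem sum_edgeElem_mul_ghostElem [Fintype E.V] [Fintype E.Ed]
    (hnosink : ∀ v : E.V, ∃ e : E.Ed, E.src e = v) :
    ∑ e, edgeElem R E e * ghostElem R E e = 1 := by
  rw [← sum_vertexElem, ← Finset.sum_fiberwise Finset.univ E.src]
  exact Finset.sum_congr rfl fun v _ => (vertexElem_eq_sum R (hnosink v)).symm

noncomputable def edgeListElem (m : List E.Ed) : LPA R E := (m.map (edgeElem R E)).prod

noncomputable def ghostListElem (m : List E.Ed) : LPA R E := (m.reverse.map (ghostElem R E)).prod

@[simp] theorem edgeListElem_nil : edgeListElem R ([] : List E.Ed) = 1 := rfl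

@[simp] theorem ghostListElem_nil : ghostListElem R ([] : List E.Ed) = 1 := rfl

theorem edgeListElem_cons (e : E.Ed) (m : List E.Ed) :
    edgeListElem R (e :: m) = edgeElem R E e * edgeListElem R m := List.prod_cons

theorem ghostListElem_cons (e : E.Ed) (m : List E.Ed) :
    ghostListElem R (e :: m) = ghostListElem R m * ghostElem R E e := by
  simp [ghostListElem]

theorem mk_single_ofList (L : List (Gen E)) :
    mk R E (MonoidAlgebra.single (FreeMonoid.ofList L) 1)
      = (L.map fun g => mk R E (gn R g)).prod := by
  induction L with
  | nil => exact map_one (mk R E)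
  | cons g L ih =>
    rw [FreeMonoid.ofList_cons, ← one_mul (1 : R), ← MonoidAlgebra.single_mul_single, map_mul, ih]
    rfl

theorem pathElem_eq (p : GPath E) :
    pathElem R p = vertexElem R E p.first * edgeListElem R p.edges := by
  rw [pathElem, GPath.word, mk_single_ofList, List.map_cons, List.prod_cons, List.map_map]
  rfl

theorem pathElemStar_eq (p : GPath E) :
    pathElemStar R p = ghostListElem R p.edges * vertexElem R E p.first := by
  rw [pathElemStar, GPath.word, wordStar, FreeMonoid.toList_ofList, mk_single_ofList]
  simp [ghostListElem, ← List.map_reverse]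
  rfl

/-- `α α*` for the path `α = (v, m)`; it vanishes when `m` is not a path from `v`. -/
noncomputable def pathProj (v : E.V) (m : List E.Ed) : LPA R E :=
  vertexElem R E v * edgeListElem R m * (ghostListElem R m * vertexElem R E v)

theorem pathElem_mul_pathElemStar (p : GPath E) :
    pathElem R p * pathElemStar R p = pathProj R p.first p.edges := by
  rw [pathElem_eq, pathElemStar_eq, pathProj]

theorem vertexElem_mul_edgeListElem_eq_zero_of_not_chainOK :
    ∀ {v : E.V} {m : List E.Ed}, ¬ chainOK E v m → vertexElem R E v * edgeListElem R m = 0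
  | _, [], h => absurd trivial h
  | v, e :: m, h => by
    rw [edgeListElem_cons]
    by_cases he : E.src e = v
    · have hm : ¬ chainOK E (E.rng e) m := fun hm => h ⟨he, hm⟩
      rw [← edgeElem_mul_vertexElem_rng, mul_assoc (edgeElem R E e),
        vertexElem_mul_edgeListElem_eq_zero_of_not_chainOK hm, mul_zero, mul_zero]
    · rw [← vertexElem_src_mul_edgeElem, ← mul_assoc, ← mul_assoc,
        vertexElem_mul_vertexElem_of_ne R (Ne.symm he), zero_mul, zero_mul]

theorem pathProj_eq_zero_of_not_chainOK {v : E.V} {m : List E.Ed} (h : ¬ chainOK E v m) :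
    pathProj R v m = 0 := by
  rw [pathProj, vertexElem_mul_edgeListElem_eq_zero_of_not_chainOK R h, zero_mul]

theorem pathProj_nil (v : E.V) : pathProj R v [] = vertexElem R E v := by
  simp [pathProj, vertexElem_mul_self]

section Refinement

variable [Fintype E.V] [Fintype E.Ed]

theorem pathProj_eq_sum_append_singleton (hnosink : ∀ v : E.V, ∃ e : E.Ed, E.src e = v)
    (v : E.V) (m : List E.Ed) :
    pathProj R v m = ∑ e, pathProj R v (m ++ [e]) := by
  symm
  calc ∑ e, pathProj R v (m ++ [e])
      = ∑ e, vertexElem R E v * edgeListElem R m * (edgeElem R E e * ghostElem R E e)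
          * (ghostListElem R m * vertexElem R E v) := by
        simp [pathProj, edgeListElem, ghostListElem, mul_assoc]
    _ = vertexElem R E v * edgeListElem R m * (∑ e, edgeElem R E e * ghostElem R E e)
          * (ghostListElem R m * vertexElem R E v) := by
        rw [Finset.mul_sum, Finset.sum_mul]
    _ = pathProj R v m := by
        rw [sum_edgeElem_mul_ghostElem R hnosink, mul_one, pathProj]

theorem pathProj_eq_sum_append (hnosink : ∀ v : E.V, ∃ e : E.Ed, E.src e = v)
    (k : ℕ) (v : E.V) (m : List E.Ed) :
    pathProj R v m = ∑ l ∈ List.listsOfLength E.Ed k, pathProj R v (m ++ l) := by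
  induction k generalizing m with
  | zero => simp [List.listsOfLength]
  | succ k ih =>
    rw [List.sum_listsOfLength_succ, pathProj_eq_sum_append_singleton R hnosink]
    exact Finset.sum_congr rfl fun e _ => by simpa using ih (m ++ [e])

theorem sum_pathProj_listsOfLength (hnosink : ∀ v : E.V, ∃ e : E.Ed, E.src e = v) (N : ℕ) :
    ∑ v, ∑ l ∈ List.listsOfLength E.Ed N, pathProj R v l = 1 := by
  calc ∑ v, ∑ l ∈ List.listsOfLength E.Ed N, pathProj R v l
      = ∑ v, pathProj R v [] :=
        Finset.sum_congr rfl fun v _ => (pathProj_eq_sum_append R hnosink N v []).symm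
    _ = 1 := by simp_rw [pathProj_nil, sum_vertexElem]

theorem pathProj_eq_sum_filter_prefix (hnosink : ∀ v : E.V, ∃ e : E.Ed, E.src e = v)
    {N : ℕ} (v : E.V) {m : List E.Ed} (hm : m.length ≤ N) :
    pathProj R v m = ∑ l ∈ (List.listsOfLength E.Ed N).filter (m <+: ·), pathProj R v l := by
  rw [List.sum_listsOfLength_filter_prefix hm, ← pathProj_eq_sum_append R hnosink]

theorem sum_pathElem_mul_pathElemStar_eq_one (hnosink : ∀ v : E.V, ∃ e : E.Ed, E.src e = v)
    {ι : Type*} [Fintype ι] (α : ι → GPath E) (hα : ∀ ξ, ∃! i, ξ ∈ cylinder (α i)) :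
    ∑ i, pathElem R (α i) * pathElemStar R (α i) = 1 := by
  obtain ⟨N, hN⟩ := Finite.exists_le fun i => (α i).edges.length
  calc ∑ i, pathElem R (α i) * pathElemStar R (α i)
      = ∑ i, ∑ v, ∑ l ∈ List.listsOfLength E.Ed N,
          if (α i).first = v ∧ (α i).edges <+: l then pathProj R v l else 0 := by
        refine Finset.sum_congr rfl fun i _ => ?_
        rw [pathElem_mul_pathElemStar, pathProj_eq_sum_filter_prefix R hnosink _ (hN i)]
        simp [ite_and, Finset.sum_filter]
    _ = ∑ v, ∑ l ∈ List.listsOfLength E.Ed N, ∑ i,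
          if (α i).first = v ∧ (α i).edges <+: l then pathProj R v l else 0 := by
        rw [Finset.sum_comm]
        exact Finset.sum_congr rfl fun v _ => Finset.sum_comm
    _ = ∑ v, ∑ l ∈ List.listsOfLength E.Ed N, pathProj R v l := by
        refine Finset.sum_congr rfl fun v _ => Finset.sum_congr rfl fun l hl => ?_
        rw [Finset.sum_ite, Finset.sum_const_zero, add_zero, Finset.sum_const]
        by_cases hc : chainOK E v l
        · have hlen i : (α i).edges.length ≤ l.length := (List.mem_listsOfLength.mp hl) ▸ hN i
          rw [(Fintype.existsUnique_iff_card_one _).mp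
            (existsUnique_prefix_of_existsUnique_mem_cylinder hnosink α hα hc hlen), one_smul]
        · rw [pathProj_eq_zero_of_not_chainOK R hc, smul_zero]
    _ = 1 := sum_pathProj_listsOfLength R hnosink N

end Refinement

noncomputable def genAct : Gen E → Module.End R (InfPath E → R)
  | .vert v => LinearMap.pi fun ξ => if E.src (ξ.seq 0) = v then LinearMap.proj ξ else 0
  | .edge e => LinearMap.pi fun ξ => if ξ.seq 0 = e then LinearMap.proj ξ.tail else 0
  | .ghost e => LinearMap.pi fun ξ =>
      if h : E.rng e = E.src (ξ.seq 0) then LinearMap.proj (ξ.cons e h) else 0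

variable {R}

@[simp] theorem genAct_vert_apply (v : E.V) (φ : InfPath E → R) (ξ : InfPath E) :
    genAct R (.vert v) φ ξ = if E.src (ξ.seq 0) = v then φ ξ else 0 := by
  simp only [genAct, LinearMap.pi_apply]
  split_ifs <;> rfl

@[simp] theorem genAct_edge_apply (e : E.Ed) (φ : InfPath E → R) (ξ : InfPath E) :
    genAct R (.edge e) φ ξ = if ξ.seq 0 = e then φ ξ.tail else 0 := by
  simp only [genAct, LinearMap.pi_apply]
  split_ifs <;> rfl

@[simp] theorem genAct_ghost_apply (e : E.Ed) (φ : InfPath E → R) (ξ : InfPath E) :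
    genAct R (.ghost e) φ ξ = if h : E.rng e = E.src (ξ.seq 0) then φ (ξ.cons e h) else 0 := by
  simp only [genAct, LinearMap.pi_apply]
  split_ifs <;> rfl

theorem genAct_edge_mul_genAct_ghost_apply (e : E.Ed) (φ : InfPath E → R) (ξ : InfPath E) :
    (genAct R (.edge e) * genAct R (.ghost e)) φ ξ = if ξ.seq 0 = e then φ ξ else 0 := by
  rw [Module.End.mul_apply, genAct_edge_apply]
  split_ifs with he
  · subst he
    rw [genAct_ghost_apply, dif_pos ξ.rng_seq_zero_eq_src_tail, InfPath.tail_cons]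
  · rfl

variable (R)

noncomputable def freeRep : MA R E →ₐ[R] Module.End R (InfPath E → R) :=
  MonoidAlgebra.lift R _ (Wd E) (FreeMonoid.lift (genAct R))

@[simp] theorem freeRep_gn (g : Gen E) : freeRep R (gn R g) = genAct R g := by
  simp [freeRep, gn]

theorem freeRep_rel ⦃a b : MA R E⦄ (h : LRel R E a b) : freeRep R a = freeRep R b := by
  cases h with
  | ck v hfin hne =>
    ext φ ξ
    simp only [map_sum, map_mul, freeRep_gn, LinearMap.sum_apply, Finset.sum_apply,
      genAct_edge_mul_genAct_ghost_apply, genAct_vert_apply]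
    simp
  | unit hfin =>
    ext φ ξ
    simp [Finset.sum_apply]
  | _ =>
    ext φ ξ
    have hchain := ξ.chain 0
    simp only [map_mul, map_zero, freeRep_gn, Module.End.mul_apply, genAct_vert_apply,
      genAct_edge_apply, genAct_ghost_apply, LinearMap.zero_apply, Pi.zero_apply,
      InfPath.cons_seq_zero, InfPath.cons_tail, InfPath.tail_seq]
    grind

noncomputable def pathSpaceRep : LPA R E →+* Module.End R (InfPath E → R) :=
  RingQuot.lift ⟨(freeRep R).toRingHom, freeRep_rel R⟩

theorem pathSpaceRep_mk_gn (g : Gen E) : pathSpaceRep R (mk R E (gn R g)) = genAct R g :=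
  (RingQuot.lift_mkRingHom_apply _ _ _).trans (freeRep_gn R g)

@[simp] theorem pathSpaceRep_vertexElem (v : E.V) :
    pathSpaceRep R (vertexElem R E v) = genAct R (.vert v) :=
  pathSpaceRep_mk_gn R _

@[simp] theorem pathSpaceRep_edgeElem (e : E.Ed) :
    pathSpaceRep R (edgeElem R E e) = genAct R (.edge e) :=
  pathSpaceRep_mk_gn R _

@[simp] theorem pathSpaceRep_ghostElem (e : E.Ed) :
    pathSpaceRep R (ghostElem R E e) = genAct R (.ghost e) :=
  pathSpaceRep_mk_gn R _

theorem pathSpaceRep_edgeListElem_mul_ghostListElem_apply :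
    ∀ (m : List E.Ed) (φ : InfPath E → R) (ξ : InfPath E),
      pathSpaceRep R (edgeListElem R m * ghostListElem R m) φ ξ
        = if ξ.take m.length = m then φ ξ else 0
  | [], φ, ξ => by simp
  | e :: m, φ, ξ => by
    have hsplit : edgeListElem R (e :: m) * ghostListElem R (e :: m)
        = edgeElem R E e * (edgeListElem R m * ghostListElem R m) * ghostElem R E e := by
      simp only [edgeListElem_cons, ghostListElem_cons, mul_assoc]
    rw [hsplit, map_mul, map_mul, Module.End.mul_apply, Module.End.mul_apply,
      pathSpaceRep_edgeElem, genAct_edge_apply,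
      pathSpaceRep_edgeListElem_mul_ghostListElem_apply m, List.length_cons, InfPath.take_succ]
    by_cases he : ξ.seq 0 = e
    · subst he
      simp [ξ.chain 0, InfPath.tail_cons]
    · simp [he]

theorem pathSpaceRep_pathElem_mul_pathElemStar_apply (p : GPath E) (φ : InfPath E → R)
    (ξ : InfPath E) :
    pathSpaceRep R (pathElem R p * pathElemStar R p) φ ξ = if ξ ∈ cylinder p then φ ξ else 0 := by
  have hsplit : pathProj R p.first p.edges = vertexElem R E p.first
      * (edgeListElem R p.edges * ghostListElem R p.edges) * vertexElem R E p.first := by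
    simp only [pathProj, mul_assoc]
  rw [pathElem_mul_pathElemStar, hsplit, map_mul, map_mul, Module.End.mul_apply,
    Module.End.mul_apply, pathSpaceRep_vertexElem, genAct_vert_apply,
    pathSpaceRep_edgeListElem_mul_ghostListElem_apply]
  simp +contextual [mem_cylinder_iff, ite_and]

theorem existsUnique_mem_cylinder_of_sum_eq_one [CharZero R] {ι : Type*} [Fintype ι]
    (α : ι → GPath E) (hsum : ∑ i, pathElem R (α i) * pathElemStar R (α i) = 1)
    (ξ : InfPath E) : ∃! i, ξ ∈ cylinder (α i) := by
  have h := congr($(congrArg (pathSpaceRep R) hsum) (fun _ => (1 : R)) ξ)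
  simp only [map_sum, map_one, LinearMap.sum_apply, Finset.sum_apply, Module.End.one_apply,
    pathSpaceRep_pathElem_mul_pathElemStar_apply, Finset.sum_boole] at h
  rw [Fintype.existsUnique_iff_card_one]
  exact_mod_cast h

end Leavitt

open Leavitt in
/-- For a finite graph with no sinks and `R` a unital commutative ring
of characteristic `0`, the cylinder sets of `α₁, …, αₙ` partition `E^∞` if and only if
`∑ αᵢαᵢ* = 1` in `L_R(E)`. -/
theorem cylinder_partition_iff_sum_path_projections_eq_one
    (E : LGraph) [Fintype E.V] [Fintype E.Ed]
    (hnosink : ∀ v : E.V, ∃ e : E.Ed, E.src e = v)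
    (R : Type) [CommRing R] [CharZero R]
    (n : ℕ) (α : Fin n → GPath E) :
    ((∀ i j : Fin n, i ≠ j → Disjoint (cylinder (α i)) (cylinder (α j))) ∧
        (⋃ i, cylinder (α i)) = (Set.univ : Set (InfPath E)))
      ↔ (∑ i, pathElem R (α i) * pathElemStar R (α i)) = 1 := by
  rw [Set.pairwise_disjoint_and_iUnion_eq_univ_iff]
  exact ⟨sum_pathElem_mul_pathElemStar_eq_one R hnosink α,
    existsUnique_mem_cylinder_of_sum_eq_one R α⟩
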